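/- Let q be a length-n word over Q = {A,C,G,T} whose even-bit sequence e(q) and odd-bit sequence o(q) (under the encoding A=00, T=01, C=10, G=11) are each nonzero codewords of a binary cyclic simplex code of length n = 2^m − 1, m ≥ 2. Then for every shift 1 ≤ i ≤ n−1, μ_i(q) ≤ 2^{m−2}, where μ_i(q) is the number of positions ℓ ∈ {1,…,n−i} with q_ℓ equal to the Watson-Crick complement of q_{i+ℓ}. -/

import Mathlib

inductive Base : Type
  | A | C | G | T
deriving DecidableEq

instance : Fintype Base :=
  ⟨{.A, .C, .G, .T}, fun x => by cases x <;> simp⟩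

def Base.compl : Base → Base
  | .A => .T
  | .T => .A
  | .C => .G
  | .G => .C

/-- The even bit of a base under the encoding A=00, T=01, C=10, G=11. -/
def Base.evenBit : Base → Bool
  | .A => false
  | .T => false
  | .C => true
  | .G => true

/-- The odd bit of a base under the encoding A=00, T=01, C=10, G=11. -/
def Base.oddBit : Base → Bool
  | .A => false
  | .T => true
  | .C => false
  | .G => true

/-- A bit as an element of `F_2`. -/
def bitVal (x : Bool) : ZMod 2 := if x then 1 else 0

/-- `μ_i(q)`: the number of indices `ℓ` with `ℓ + i < n` (0-based) such that
`q_ℓ` is the Watson-Crick complement of `q_{ℓ+i}`. -/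
noncomputable def mu (n i : ℕ) (q : Fin n → Base) : ℕ :=
  Set.ncard {ℓ : ℕ | ∃ h : ℓ + i < n, q ⟨ℓ, by omega⟩ = (q ⟨ℓ + i, h⟩).compl}

/-!
Put `u = e + σⁱe` and `v = o + σⁱo`, with `σ` the cyclic shift. Every position counted by `μ_i`
has `u_ℓ = 0` and `v_ℓ = 1`; counting cyclically only adds the wrapped-around positions.
Both `u` and `v` are sums of two shifts of the generator, hence codewords, and `u ≠ 0` because the
code has `n + 1` elements, so the `n` shifts are distinct. If `v ∈ {0, u}` no position qualifies;
otherwise `u`, `v`, `u + v` all have weight `2^(m-1)`, and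
`2 · #{u = 0, v = 1} = wt (u + v) + wt v - wt u = 2^(m-1)`.
-/

open Finset

lemma Base.eq_compl_iff (a b : Base) : a = b.compl ↔
    bitVal a.evenBit + bitVal b.evenBit = 0 ∧ bitVal a.oddBit + bitVal b.oddBit = 1 := by
  revert a b; decide

lemma Function.injective_of_ncard_insert_range {α β : Type*} [Finite α] {φ : α → β} {b : β}
    (h : (insert b (Set.range φ)).ncard = Nat.card α + 1) : φ.Injective := by
  have hrange : (Set.range φ).ncard ≤ Nat.card α := by
    rw [← Set.image_univ, ← Set.ncard_univ]
    exact Set.ncard_image_le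
  have hinsert := Set.ncard_insert_le b (Set.range φ)
  rw [← Set.injOn_univ, ← Set.ncard_image_iff, Set.image_univ, Set.ncard_univ]
  omega

section Weights

variable {ι : Type*} [Fintype ι]

lemma two_mul_card_zero_one_add_card (u v : ι → ZMod 2) :
    2 * #{ℓ | u ℓ = 0 ∧ v ℓ = 1} + #{ℓ | u ℓ = 1} = #{ℓ | (u + v) ℓ = 1} + #{ℓ | v ℓ = 1} := by
  simp only [card_filter, mul_sum, ← sum_add_distrib]
  refine sum_congr rfl fun ℓ _ => ?_
  have bit : ∀ a : ZMod 2, a = 0 ∨ a = 1 := by decide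
  rcases bit (u ℓ) with hu | hu <;> rcases bit (v ℓ) with hv | hv <;> simp [hu, hv]

lemma card_zero_one_le_of_constant_weight {C : Set (ι → ZMod 2)} {k : ℕ}
    (hadd : ∀ c ∈ C, ∀ c' ∈ C, c + c' ∈ C)
    (hwt : ∀ c ∈ C, c ≠ 0 → #{ℓ | c ℓ = 1} = 2 * k)
    {u v : ι → ZMod 2} (hu : u ∈ C) (hu0 : u ≠ 0) (hv : v ∈ C) :
    #{ℓ | u ℓ = 0 ∧ v ℓ = 1} ≤ k := by
  by_cases hv0 : v = 0
  · simp [hv0]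
  by_cases huv : u = v
  · rw [huv, filter_false_of_mem fun ℓ _ h => zero_ne_one (h.1.symm.trans h.2)]
    exact Nat.zero_le k
  have huv0 : u + v ≠ 0 := fun h => huv (funext fun ℓ => CharTwo.add_eq_zero.mp (congrFun h ℓ))
  have := two_mul_card_zero_one_add_card u v
  rw [hwt u hu hu0, hwt v hv hv0, hwt _ (hadd u hu v hv) huv0] at this
  omega

end Weights

def shift {n : ℕ} {α : Type*} (c : Fin n → α) (s : Fin n) : Fin n → α := fun ℓ => c (ℓ + s)

def evenWord {n : ℕ} (q : Fin n → Base) : Fin n → ZMod 2 := fun ℓ => bitVal (q ℓ).evenBit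

def oddWord {n : ℕ} (q : Fin n → Base) : Fin n → ZMod 2 := fun ℓ => bitVal (q ℓ).oddBit

section CyclicCode

variable {n : ℕ} {gen : Fin n → ZMod 2} {C : Set (Fin n → ZMod 2)}

lemma injective_shift_of_ncard (hC : C = {0} ∪ {c | ∃ k : Fin n, c = fun i => gen (i + k)})
    (hcard : C.ncard = n + 1) : Function.Injective (shift gen) := by
  apply Function.injective_of_ncard_insert_range (b := 0)
  rw [Nat.card_eq_fintype_card, Fintype.card_fin, ← hcard, hC, Set.singleton_union]
  congr 2
  ext c
  exact exists_congr fun k => eq_comm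

lemma add_shift_mem (hC : C = {0} ∪ {c | ∃ k : Fin n, c = fun i => gen (i + k)})
    (hadd : ∀ c ∈ C, ∀ c' ∈ C, c + c' ∈ C) {c : Fin n → ZMod 2} (hc : c ∈ C) (s : Fin n) :
    c + shift c s ∈ C := by
  have hshift : ∀ k, shift gen k ∈ C := fun k => by rw [hC]; exact Or.inr ⟨k, rfl⟩
  rw [hC] at hc
  obtain rfl | ⟨k, rfl⟩ := hc
  · rw [hC]; left; ext; simp [shift]
  · show shift gen k + shift (shift gen k) s ∈ C
    rw [show shift (shift gen k) s = shift gen (s + k) from funext fun ℓ => by simp [shift, add_assoc]]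
    exact hadd _ (hshift k) _ (hshift (s + k))

lemma add_shift_ne_zero [NeZero n] (hC : C = {0} ∪ {c | ∃ k : Fin n, c = fun i => gen (i + k)})
    (hcard : C.ncard = n + 1) {c : Fin n → ZMod 2} (hc : c ∈ C) (hc0 : c ≠ 0) {s : Fin n}
    (hs : s ≠ 0) : c + shift c s ≠ 0 := by
  rw [hC] at hc
  obtain rfl | ⟨k, rfl⟩ := hc
  · exact absurd rfl hc0
  intro h
  have hk : shift gen k = shift gen (s + k) := funext fun ℓ => by
    simpa [shift, add_assoc] using CharTwo.add_eq_zero.mp (congrFun h ℓ)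
  exact hs (right_eq_add.mp (injective_shift_of_ncard hC hcard hk))

end CyclicCode

lemma mu_le_card_shift {n i : ℕ} (hi : i < n) (q : Fin n → Base) :
    mu n i q ≤ #{ℓ | (evenWord q + shift (evenWord q) ⟨i, hi⟩) ℓ = 0 ∧
      (oddWord q + shift (oddWord q) ⟨i, hi⟩) ℓ = 1} := by
  calc mu n i q ≤ #(({ℓ | q ℓ = (q (ℓ + ⟨i, hi⟩)).compl} : Finset (Fin n)).image Fin.val) := by
        rw [mu, ← Set.ncard_coe_finset]
        refine Set.ncard_le_ncard ?_ (Finset.finite_toSet _)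
        rintro ℓ ⟨h, hq⟩
        have hwrap : (⟨ℓ, by omega⟩ : Fin n) + ⟨i, hi⟩ = ⟨ℓ + i, h⟩ :=
          Fin.ext (Nat.mod_eq_of_lt h)
        exact mem_coe.mpr (mem_image.mpr ⟨_, mem_filter.mpr ⟨mem_univ _, by rwa [hwrap]⟩, rfl⟩)
    _ ≤ _ := card_image_le.trans_eq <| congrArg card <| filter_congr fun ℓ _ => Base.eq_compl_iff _ _

theorem stmt13_general (m : ℕ) (hm : 2 ≤ m) (n : ℕ) [NeZero n] (hn : n = 2 ^ m - 1)
    (gen : Fin n → ZMod 2)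
    (C : Set (Fin n → ZMod 2))
    (hC : C = {0} ∪ {c | ∃ k : Fin n, c = fun i => gen (i + k)})
    (hcard : C.ncard = 2 ^ m)
    (hadd : ∀ c ∈ C, ∀ c' ∈ C, c + c' ∈ C)
    (hwt : ∀ c ∈ C, c ≠ 0 →
      (Finset.univ.filter (fun i : Fin n => c i = 1)).card = 2 ^ (m - 1))
    (q : Fin n → Base)
    (he : (fun i : Fin n => bitVal (q i).evenBit) ∈ C)
    (he0 : (fun i : Fin n => bitVal (q i).evenBit) ≠ 0)
    (ho : (fun i : Fin n => bitVal (q i).oddBit) ∈ C) :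
    ∀ i, 1 ≤ i → i ≤ n - 1 → mu n i q ≤ 2 ^ (m - 2) := by
  intro i hi1 hin
  have hi : i < n := by omega
  have hs : (⟨i, hi⟩ : Fin n) ≠ 0 := Fin.ne_of_val_ne (show i ≠ 0 by omega)
  have hcard' : C.ncard = n + 1 := by rw [hcard]; have := Nat.one_le_two_pow (n := m); omega
  have hwt' : ∀ c ∈ C, c ≠ 0 → #{ℓ | c ℓ = 1} = 2 * 2 ^ (m - 2) := fun c hc hc0 => by
    rw [hwt c hc hc0, ← pow_succ']; congr 1; omega
  exact (mu_le_card_shift hi q).trans <| card_zero_one_le_of_constant_weight hadd hwt'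
    (add_shift_mem hC hadd he _) (add_shift_ne_zero hC hcard' he he0 hs) (add_shift_mem hC hadd ho _)

/-- If the even-bit and odd-bit sequences of a length-`n = 2^m - 1` DNA word `q` are
nonzero codewords of a binary cyclic simplex code of dimension `m ≥ 2` (the code
consisting of the zero word and the `n` cyclic shifts of a fixed nonzero generator,
linear, with all nonzero codewords of weight `2^(m-1)`), then `μ_i(q) ≤ 2^(m-2)` for
every shift `1 ≤ i ≤ n - 1`. -/
theorem stmt13 (m : ℕ) (hm : 2 ≤ m) (n : ℕ) [NeZero n] (hn : n = 2 ^ m - 1)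
    (gen : Fin n → ZMod 2) (hgen : gen ≠ 0)
    (C : Set (Fin n → ZMod 2))
    (hC : C = {0} ∪ {c | ∃ k : Fin n, c = fun i => gen (i + k)})
    (hcard : C.ncard = 2 ^ m)
    (hadd : ∀ c ∈ C, ∀ c' ∈ C, c + c' ∈ C)
    (hwt : ∀ c ∈ C, c ≠ 0 →
      (Finset.univ.filter (fun i : Fin n => c i = 1)).card = 2 ^ (m - 1))
    (q : Fin n → Base)
    (he : (fun i : Fin n => bitVal (q i).evenBit) ∈ C)
    (he0 : (fun i : Fin n => bitVal (q i).evenBit) ≠ 0)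
    (ho : (fun i : Fin n => bitVal (q i).oddBit) ∈ C)
    (ho0 : (fun i : Fin n => bitVal (q i).oddBit) ≠ 0) :
    ∀ i, 1 ≤ i → i ≤ n - 1 → mu n i q ≤ 2 ^ (m - 2) :=
  stmt13_general m hm n hn gen C hC hcard hadd hwt q he he0 ho
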